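/- arXiv:2404.06115 — 3 statements merged into one kernel-verified Lean document; each statement's English description precedes it below -/
import Mathlib

section
/- Let T_A and T_B be finite abelian groups and let r ≥ 0 be an integer. If (T_A ⊗_ℤ T_A) ⊕ T_A^{2r} is isomorphic to (T_B ⊗_ℤ T_B) ⊕ T_B^{2r} as abelian groups, then T_A is isomorphic to T_B. -/
/-!
Count `n`-torsion. Writing `T ≅ ⨁ ℤ/q_i` with prime powers `q_i` and using
`ℤ/a ⊗ ℤ/b ≅ ℤ/gcd(a, b)`, the group `X = (T ⊗ T) × T^{2r}` has
`|X[n]| = ∏_{i,j} gcd(q_i, q_j, n) · ∏_i gcd(q_i, n)^{2r}`.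
At `n = P^k` its `P`-adic valuation is `∑_{m<k} (a_m² + 2r a_m)`, where
`a_m = #{i | v_P(q_i) > m}` (`countAbove`) is the conjugate partition of the `P`-primary
part of `T`. Since `x ↦ x² + 2rx` is injective on `ℕ`, these valuations determine every
`a_m`, hence the multiplicity of each cyclic factor `ℤ/P^(k+1)`, hence `T`.
-/

open TensorProduct Finset

noncomputable def nTorsionCard (G : Type*) [AddCommGroup G] (n : ℕ) : ℕ :=
  Nat.card {g : G // n • g = 0}

section nTorsionCard

variable {G H : Type*} [AddCommGroup G] [AddCommGroup H]

lemma nTorsionCard_congr (e : G ≃+ H) (n : ℕ) : nTorsionCard G n = nTorsionCard H n :=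
  Nat.card_congr <| e.toEquiv.subtypeEquiv fun g => by
    simp [← map_nsmul]

lemma nTorsionCard_prod (n : ℕ) :
    nTorsionCard (G × H) n = nTorsionCard G n * nTorsionCard H n := by
  unfold nTorsionCard
  rw [← Nat.card_prod]
  exact Nat.card_congr <| (Equiv.subtypeEquivRight fun _ => Prod.ext_iff).trans
    (Equiv.subtypeProdEquivProd (p := fun g : G => n • g = 0) (q := fun h : H => n • h = 0))

lemma nTorsionCard_pi {ι : Type*} [Fintype ι] (M : ι → Type*) [∀ i, AddCommGroup (M i)]
    (n : ℕ) : nTorsionCard (∀ i, M i) n = ∏ i, nTorsionCard (M i) n := by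
  unfold nTorsionCard
  rw [← Nat.card_pi]
  exact Nat.card_congr <| (Equiv.subtypeEquivRight fun _ => funext_iff).trans
    (Equiv.subtypePiEquivPi (p := fun i (x : M i) => n • x = 0))

lemma nTorsionCard_zmod (m n : ℕ) [NeZero m] : nTorsionCard (ZMod m) n = m.gcd n :=
  (IsAddCyclic.card_nsmulAddMonoidHom_ker (ZMod m) n).trans (by rw [Nat.card_zmod])

end nTorsionCard

namespace ZMod

variable (a b : ℕ)

noncomputable def tensorToGcd : ZMod a ⊗[ℤ] ZMod b →+ ZMod (a.gcd b) :=
  (TensorProduct.lift <| (LinearMap.mul ℤ _).compl₁₂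
    (castHom (Nat.gcd_dvd_left a b) _).toIntAlgHom.toLinearMap
    (castHom (Nat.gcd_dvd_right a b) _).toIntAlgHom.toLinearMap).toAddMonoidHom

lemma tensorToGcd_intCast_tmul (i j : ℤ) :
    tensorToGcd a b ((i : ZMod a) ⊗ₜ (j : ZMod b)) = ((i * j : ℤ) : ZMod (a.gcd b)) := by
  simp [tensorToGcd]

lemma intCast_tmul_intCast (i j : ℤ) :
    (i : ZMod a) ⊗ₜ[ℤ] (j : ZMod b) =
      (i * j) • ((1 : ZMod a) ⊗ₜ[ℤ] (1 : ZMod b)) := by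
  rw [← smul_tmul_smul, zsmul_one, zsmul_one]

lemma gcd_zsmul_one_tmul_one : (a.gcd b : ℤ) • ((1 : ZMod a) ⊗ₜ[ℤ] (1 : ZMod b)) = 0 := by
  have ha : (a : ℤ) • ((1 : ZMod a) ⊗ₜ[ℤ] (1 : ZMod b)) = 0 := by
    rw [smul_tmul', zsmul_one, Int.cast_natCast, natCast_self, zero_tmul]
  have hb : (b : ℤ) • ((1 : ZMod a) ⊗ₜ[ℤ] (1 : ZMod b)) = 0 := by
    rw [← tmul_smul, zsmul_one, Int.cast_natCast, natCast_self, tmul_zero]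
  exact addOrderOf_dvd_iff_zsmul_eq_zero.1 <| Int.natCast_dvd_natCast.2 <| Nat.dvd_gcd
    (Int.natCast_dvd_natCast.1 (addOrderOf_dvd_iff_zsmul_eq_zero.2 ha))
    (Int.natCast_dvd_natCast.1 (addOrderOf_dvd_iff_zsmul_eq_zero.2 hb))

noncomputable def gcdToTensor : ZMod (a.gcd b) →+ ZMod a ⊗[ℤ] ZMod b :=
  ZMod.lift _ ⟨zmultiplesHom _ (1 ⊗ₜ 1), gcd_zsmul_one_tmul_one a b⟩

lemma gcdToTensor_intCast (k : ℤ) :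
    gcdToTensor a b k = k • ((1 : ZMod a) ⊗ₜ[ℤ] (1 : ZMod b)) :=
  ZMod.lift_coe _ _ k

noncomputable def tensorEquivGcd : ZMod a ⊗[ℤ] ZMod b ≃+ ZMod (a.gcd b) where
  toFun := tensorToGcd a b
  invFun := gcdToTensor a b
  left_inv t := by
    induction t using TensorProduct.induction_on with
    | zero => simp
    | tmul x y =>
      obtain ⟨i, rfl⟩ := intCast_surjective x
      obtain ⟨j, rfl⟩ := intCast_surjective y
      rw [tensorToGcd_intCast_tmul, gcdToTensor_intCast, intCast_tmul_intCast]
    | add s t hs ht => rw [map_add, map_add, hs, ht]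
  right_inv z := by
    obtain ⟨k, rfl⟩ := intCast_surjective z
    rw [gcdToTensor_intCast, ← mul_one k, ← intCast_tmul_intCast, tensorToGcd_intCast_tmul]
  map_add' := map_add _

end ZMod

section DirectSum

open DirectSum

variable {ι : Type*} [Fintype ι]

lemma nTorsionCard_directSum (M : ι → Type*) [∀ i, AddCommGroup (M i)] (n : ℕ) :
    nTorsionCard (⨁ i, M i) n = ∏ i, nTorsionCard (M i) n := by
  rw [nTorsionCard_congr (DirectSum.addEquivProd M), nTorsionCard_pi]

lemma nTorsionCard_directSum_zmod {q : ι → ℕ} (hq : ∀ i, q i ≠ 0) (n : ℕ) :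
    nTorsionCard (⨁ i, ZMod (q i)) n = ∏ i, (q i).gcd n := by
  rw [nTorsionCard_directSum]
  refine prod_congr rfl fun i _ => ?_
  have := NeZero.mk (hq i)
  exact nTorsionCard_zmod _ _

lemma nTorsionCard_tensor_directSum_zmod [DecidableEq ι] {q : ι → ℕ} (hq : ∀ i, q i ≠ 0)
    (n : ℕ) :
    nTorsionCard ((⨁ i, ZMod (q i)) ⊗[ℤ] (⨁ i, ZMod (q i))) n =
      ∏ ij : ι × ι, ((q ij.1).gcd (q ij.2)).gcd n := by
  rw [nTorsionCard_congr (H := ⨁ ij : ι × ι, ZMod (q ij.1) ⊗[ℤ] ZMod (q ij.2))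
    (TensorProduct.directSum ℤ ℤ _ _).toAddEquiv, nTorsionCard_directSum]
  refine prod_congr rfl fun ij _ => ?_
  have : NeZero ((q ij.1).gcd (q ij.2)) := ⟨Nat.gcd_ne_zero_left (hq ij.1)⟩
  rw [nTorsionCard_congr (ZMod.tensorEquivGcd _ _), nTorsionCard_zmod]

lemma nTorsionCard_tensorSq_prod_pi [DecidableEq ι] {q : ι → ℕ} (hq : ∀ i, q i ≠ 0)
    {T : Type*} [AddCommGroup T] (e : T ≃+ ⨁ i, ZMod (q i)) (r n : ℕ) :
    nTorsionCard ((T ⊗[ℤ] T) × (Fin (2 * r) → T)) n =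
      (∏ ij : ι × ι, ((q ij.1).gcd (q ij.2)).gcd n) * (∏ i, (q i).gcd n) ^ (2 * r) := by
  rw [nTorsionCard_prod, nTorsionCard_pi, prod_const, card_univ, Fintype.card_fin,
    nTorsionCard_congr (TensorProduct.congr e.toIntLinearEquiv e.toIntLinearEquiv).toAddEquiv,
    nTorsionCard_congr e, nTorsionCard_tensor_directSum_zmod hq, nTorsionCard_directSum_zmod hq]

end DirectSum

section countAbove

variable {ι κ : Type*} [Fintype ι] [Fintype κ]

def countAbove (v : ι → ℕ) (m : ℕ) : ℕ := #{i | m < v i}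

lemma min_eq_sum_range_ite (a k : ℕ) : min a k = ∑ m ∈ range k, if m < a then 1 else 0 := by
  rw [sum_boole, Nat.cast_id, ← card_range (min a k)]
  congr 1
  ext m
  simp only [mem_filter, mem_range, lt_min_iff, and_comm]

lemma sum_min_eq_sum_countAbove (v : ι → ℕ) (k : ℕ) :
    ∑ i, min (v i) k = ∑ m ∈ range k, countAbove v m := by
  simp only [min_eq_sum_range_ite, countAbove, card_filter]
  exact sum_comm

lemma sum_min_min_eq_sum_countAbove_sq (v : ι → ℕ) (k : ℕ) :
    ∑ ij : ι × ι, min (min (v ij.1) (v ij.2)) k = ∑ m ∈ range k, countAbove v m ^ 2 := by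
  have hmin (a b : ℕ) : min (min a b) k =
      ∑ m ∈ range k, (if m < a then 1 else 0) * (if m < b then 1 else 0) := by
    rw [min_eq_sum_range_ite]
    refine sum_congr rfl fun m _ => ?_
    by_cases ha : m < a <;> by_cases hb : m < b <;> simp [ha, hb]
  simp only [hmin, countAbove, card_filter, sq, sum_mul_sum, Fintype.sum_prod_type]
  exact (sum_congr rfl fun i _ => sum_comm).trans sum_comm

lemma countAbove_eq_card_add (v : ι → ℕ) (k : ℕ) :
    countAbove v k = #{i | v i = k + 1} + countAbove v (k + 1) := by
  simp only [countAbove, card_filter, ← sum_add_distrib]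
  exact sum_congr rfl fun i _ => by split_ifs <;> omega

lemma card_eq_succ_eq_of_sum_min_eq (r : ℕ) (v : ι → ℕ) (w : κ → ℕ)
    (h : ∀ k, ∑ ij : ι × ι, min (min (v ij.1) (v ij.2)) k + 2 * r * ∑ i, min (v i) k =
      ∑ ij : κ × κ, min (min (w ij.1) (w ij.2)) k + 2 * r * ∑ j, min (w j) k) (k : ℕ) :
    #{i | v i = k + 1} = #{j | w j = k + 1} := by
  have hsum (k : ℕ) : ∑ m ∈ range k, (countAbove v m ^ 2 + 2 * r * countAbove v m) =
      ∑ m ∈ range k, (countAbove w m ^ 2 + 2 * r * countAbove w m) := by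
    rw [sum_add_distrib, sum_add_distrib, ← mul_sum, ← mul_sum, ← sum_min_eq_sum_countAbove,
      ← sum_min_eq_sum_countAbove, ← sum_min_min_eq_sum_countAbove_sq,
      ← sum_min_min_eq_sum_countAbove_sq]
    exact h k
  have hquad (m : ℕ) : countAbove v m ^ 2 + 2 * r * countAbove v m =
      countAbove w m ^ 2 + 2 * r * countAbove w m := by
    have := hsum (m + 1)
    rwa [sum_range_succ, sum_range_succ, hsum m, add_left_cancel_iff] at this
  have hmono : StrictMono fun x : ℕ => x ^ 2 + 2 * r * x := fun x y hxy =>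
    add_lt_add_of_lt_of_le (Nat.pow_lt_pow_left hxy two_ne_zero) (Nat.mul_le_mul_left _ hxy.le)
  have hcount (m : ℕ) : countAbove v m = countAbove w m := hmono.injective (hquad m)
  have := countAbove_eq_card_add v k
  have := countAbove_eq_card_add w k
  have := hcount k
  have := hcount (k + 1)
  omega

end countAbove

lemma Nat.factorization_gcd_prime_pow {P m : ℕ} (hP : P.Prime) (hm : m ≠ 0) (k : ℕ) :
    (m.gcd (P ^ k)).factorization P = min (m.factorization P) k := by
  rw [Nat.factorization_gcd hm (pow_ne_zero _ hP.ne_zero), Finsupp.inf_apply,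
    hP.factorization_pow, Finsupp.single_eq_same]

lemma factorization_prod_gcd_prime_pow {ι : Type*} [Fintype ι] (r : ℕ) {q : ι → ℕ}
    (hq : ∀ i, q i ≠ 0) {P : ℕ} (hP : P.Prime) (k : ℕ) :
    ((∏ ij : ι × ι, ((q ij.1).gcd (q ij.2)).gcd (P ^ k)) *
        (∏ i, (q i).gcd (P ^ k)) ^ (2 * r)).factorization P =
      ∑ ij : ι × ι, min (min ((q ij.1).factorization P) ((q ij.2).factorization P)) k +
        2 * r * ∑ i, min ((q i).factorization P) k := by
  have hgcd (i : ι) : (q i).gcd (P ^ k) ≠ 0 := Nat.gcd_ne_zero_left (hq i)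
  have hgcd₂ (ij : ι × ι) : ((q ij.1).gcd (q ij.2)).gcd (P ^ k) ≠ 0 :=
    Nat.gcd_ne_zero_left (Nat.gcd_ne_zero_left (hq ij.1))
  rw [Nat.factorization_mul (prod_ne_zero_iff.2 fun ij _ => hgcd₂ ij)
      (pow_ne_zero _ (prod_ne_zero_iff.2 fun i _ => hgcd i)), Nat.factorization_pow,
    Nat.factorization_prod fun ij _ => hgcd₂ ij, Nat.factorization_prod fun i _ => hgcd i]
  simp only [Finsupp.add_apply, Finsupp.smul_apply, Finsupp.finsetSum_apply, smul_eq_mul]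
  congr 1
  · refine sum_congr rfl fun ij _ => ?_
    rw [Nat.factorization_gcd_prime_pow hP (Nat.gcd_ne_zero_left (hq ij.1)),
      Nat.factorization_gcd (hq ij.1) (hq ij.2), Finsupp.inf_apply]
  · simp only [Nat.factorization_gcd_prime_pow hP (hq _)]

lemma Nat.Prime.pow_eq_prime_pow_iff {p P e k : ℕ} (hp : p.Prime) (hP : P.Prime) (hk : k ≠ 0) :
    p ^ e = P ^ k ↔ (p ^ e).factorization P = k := by
  constructor
  · rintro h
    rw [h, hP.factorization_pow, Finsupp.single_eq_same]
  · rw [hp.factorization_pow, Finsupp.single_apply]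
    split_ifs with hpP
    · rintro rfl
      rw [hpP]
    · exact fun h => absurd h.symm hk

lemma card_pow_eq_of_card_factorization_eq {ι κ : Type*} [Fintype ι] [Fintype κ]
    {p e : ι → ℕ} {p' e' : κ → ℕ} (hp : ∀ i, (p i).Prime) (hp' : ∀ j, (p' j).Prime)
    (h : ∀ P, P.Prime → ∀ k, #{i | (p i ^ e i).factorization P = k + 1} =
      #{j | (p' j ^ e' j).factorization P = k + 1})
    {n : ℕ} (hn : n ≠ 1) : #{i | p i ^ e i = n} = #{j | p' j ^ e' j = n} := by
  by_cases hnP : IsPrimePow n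
  · obtain ⟨P, k, hP, hk, rfl⟩ := (isPrimePow_nat_iff n).1 hnP
    obtain ⟨k, rfl⟩ := Nat.exists_eq_add_one_of_ne_zero hk.ne'
    simp only [(hp _).pow_eq_prime_pow_iff hP hk.ne', (hp' _).pow_eq_prime_pow_iff hP hk.ne']
    exact h P hP k
  · have hne {p e : ℕ} (hp : p.Prime) : p ^ e ≠ n := by
      rintro rfl
      rcases Nat.eq_zero_or_pos e with rfl | he
      · exact hn (pow_zero p)
      · exact hnP (hp.isPrimePow.pow he.ne')
    simp only [hne (hp _), hne (hp' _), filter_false, card_empty]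

noncomputable def piZModAddEquivPiFiber {ι : Type*} (q : ι → ℕ) :
    (∀ i, ZMod (q i)) ≃+ ∀ n, ({i // q i = n} → ZMod n) :=
  ((LinearEquiv.piCongrLeft ℤ (fun i => ZMod (q i)) (Equiv.sigmaFiberEquiv q)).symm.trans
    (LinearEquiv.piCurry ℤ fun n (i : {i // q i = n}) => ZMod (q i))).toAddEquiv.trans
  (AddEquiv.piCongrRight fun _ => AddEquiv.piCongrRight fun i =>
    (ZMod.ringEquivCongr i.2).toAddEquiv)

lemma nonempty_piZMod_addEquiv_of_card_eq {ι κ : Type*} [Fintype ι] [Fintype κ]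
    {q : ι → ℕ} {q' : κ → ℕ} (h : ∀ n, n ≠ 1 → #{i | q i = n} = #{j | q' j = n}) :
    Nonempty ((∀ i, ZMod (q i)) ≃+ ∀ j, ZMod (q' j)) := by
  classical
  have fiber (n : ℕ) : ({i // q i = n} → ZMod n) ≃+ ({j // q' j = n} → ZMod n) := by
    by_cases hn : n = 1
    · subst hn
      exact AddEquiv.ofUnique
    · refine AddEquiv.arrowCongr (Fintype.equivOfCardEq ?_) (AddEquiv.refl _)
      rw [Fintype.card_subtype, Fintype.card_subtype, h n hn]
  exact ⟨(piZModAddEquivPiFiber q).trans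
    ((AddEquiv.piCongrRight fiber).trans (piZModAddEquivPiFiber q').symm)⟩

/-- if `T_A, T_B` are finite abelian groups with
`(T_A ⊗ T_A) ⊕ T_A^{2r} ≅ (T_B ⊗ T_B) ⊕ T_B^{2r}`, then `T_A ≅ T_B`. -/
theorem stmt_9 (r : ℕ) (TA TB : Type) [AddCommGroup TA] [AddCommGroup TB]
    [Finite TA] [Finite TB]
    (h : Nonempty (
      ((TA ⊗[ℤ] TA) × (Fin (2 * r) → TA))
      ≃+
      ((TB ⊗[ℤ] TB) × (Fin (2 * r) → TB)))) :
    Nonempty (TA ≃+ TB) := by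
  classical
  obtain ⟨E⟩ := h
  obtain ⟨ι, _, p, hp, e, ⟨eA⟩⟩ := AddCommGroup.equiv_directSum_zmod_of_finite TA
  obtain ⟨κ, _, p', hp', e', ⟨eB⟩⟩ := AddCommGroup.equiv_directSum_zmod_of_finite TB
  have hq (i : ι) : p i ^ e i ≠ 0 := pow_ne_zero _ (hp i).ne_zero
  have hq' (j : κ) : p' j ^ e' j ≠ 0 := pow_ne_zero _ (hp' j).ne_zero
  have hinv (n : ℕ) := (nTorsionCard_tensorSq_prod_pi hq eA r n).symm.trans <|
    (nTorsionCard_congr E n).trans (nTorsionCard_tensorSq_prod_pi hq' eB r n)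
  have hfactor (P : ℕ) (hP : P.Prime) := card_eq_succ_eq_of_sum_min_eq r
      (fun i => (p i ^ e i).factorization P) (fun j => (p' j ^ e' j).factorization P) fun k => by
    rw [← factorization_prod_gcd_prime_pow r hq hP, ← factorization_prod_gcd_prime_pow r hq' hP,
      hinv]
  obtain ⟨F⟩ := nonempty_piZMod_addEquiv_of_card_eq fun n hn =>
    card_pow_eq_of_card_factorization_eq hp hp' hfactor hn
  exact ⟨eA.trans <| (DirectSum.addEquivProd _).trans <|
    F.trans <| (DirectSum.addEquivProd _).symm.trans eB.symm⟩
end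

section
/- Let G be a finitely generated abelian group and d ∈ G. Then there exists an element ẽ ∈ ℤ ⊕ (G/⟨d⟩) such that (ℤ ⊕ (G/⟨d⟩))/⟨ẽ⟩ is isomorphic to G. -/
/-!
Write `G ⧸ ⟨d⟩ ≅ ∏ᵢ ℤ/aᵢ` (free summands having `aᵢ = 0`) and lift the standard generators to
`zᵢ ∈ G`, so that `aᵢ • zᵢ = cᵢ • d`. If `n` is the order of `d`, then `G` is presented by the
generators `d, zᵢ` subject to `n • d = 0` and `aᵢ • zᵢ = cᵢ • d`: it is the cokernel of a square
integer matrix `M`. The transpose `Mᵀ` presents `(ℤ × ∏ᵢ ℤ/aᵢ) ⧸ ⟨(n, -c)⟩`, and over a PID a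
square matrix and its transpose have isomorphic cokernels, both being equivalent to the same
diagonal matrix. Hence `ẽ = (n, -c)` works.
-/

open Matrix LinearMap

theorem Function.Embedding.exists_sumEquiv_inr {α β ι : Type*} [Fintype α] [Fintype β]
    [Fintype ι] (g : β ↪ ι) (h : Fintype.card α + Fintype.card β = Fintype.card ι) :
    ∃ e : α ⊕ β ≃ ι, ∀ b, e (.inr b) = g b := by
  classical
  have hcard : Fintype.card α = Fintype.card {i // i ∉ Set.range g} := by
    rw [Fintype.card_subtype_compl, Fintype.card_range]; omega
  exact ⟨(Equiv.sumCongr (Fintype.equivOfCardEq hcard) (Equiv.ofInjective g g.injective)).trans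
    ((Equiv.sumComm _ _).trans (Equiv.sumCompl _)), fun b => rfl⟩

section Diagonalization

variable {R : Type*} [CommRing R] [IsDomain R] [IsPrincipalIdealRing R]

theorem LinearMap.exists_basis_apply_eq_smul_basis {M N : Type*} [AddCommGroup M] [Module R M]
    [AddCommGroup N] [Module R N] {ι : Type*} [Fintype ι] (bM : Module.Basis ι R M)
    (bN : Module.Basis ι R N) (f : M →ₗ[R] N) :
    ∃ (v : Module.Basis ι R M) (w : Module.Basis ι R N) (c : ι → R), ∀ i, f (v i) = c i • w i := by
  obtain ⟨n, snf⟩ := (range f).smithNormalForm bN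
  obtain ⟨k, bK⟩ := (ker f).basisOfPid bM
  -- lift the Smith basis of `range f` and complete it by a basis of `ker f`
  let u := Module.Basis.sumQuot bK (snf.bN.map f.quotKerEquivRange.symm)
  have hu_inl (j : Fin k) : f (u (.inl j)) = 0 := by
    simp [u]
  have hu_inr (i : Fin n) : f (u (.inr i)) = snf.a i • snf.bM (snf.f i) := by
    rw [← snf.snf i, ← f.quotKerEquivRange_apply_mk, Module.Basis.sumQuot_inr]
    simp
  obtain ⟨e, he⟩ := snf.f.exists_sumEquiv_inr (α := Fin k)
    (by simpa using Fintype.card_congr (u.indexEquiv bM))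
  refine ⟨u.reindex e, snf.bM, Function.extend snf.f snf.a 0, fun i => ?_⟩
  obtain ⟨x, rfl⟩ := e.surjective i
  rw [Module.Basis.reindex_apply, e.symm_apply_apply]
  rcases x with j | i
  · rw [hu_inl, Function.extend_apply', Pi.zero_apply, zero_smul]
    rintro ⟨i, hi⟩
    exact Sum.inr_ne_inl (e.injective ((he i).trans hi))
  · rw [hu_inr, he, snf.f.injective.extend_apply]

theorem Matrix.exists_isUnit_mul_diagonal_mul_eq {ι : Type*} [Fintype ι] [DecidableEq ι]
    (A : Matrix ι ι R) :
    ∃ (P Q : Matrix ι ι R) (c : ι → R), IsUnit P ∧ IsUnit Q ∧ A = P * diagonal c * Q := by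
  let b := Pi.basisFun R ι
  obtain ⟨v, w, c, hvw⟩ := A.mulVecLin.exists_basis_apply_eq_smul_basis b b
  have hdiag : LinearMap.toMatrix v w A.mulVecLin = diagonal c := by
    ext i j
    rw [LinearMap.toMatrix_apply, hvw, map_smul, w.repr_self]
    obtain rfl | h := eq_or_ne i j <;> simp [*]
  refine ⟨b.toMatrix w, v.toMatrix b, c, IsUnit.of_mul_eq_one _ (b.toMatrix_mul_toMatrix_flip w),
    IsUnit.of_mul_eq_one _ (v.toMatrix_mul_toMatrix_flip b), ?_⟩
  rw [← hdiag, basis_toMatrix_mul_linearMap_toMatrix_mul_basis_toMatrix,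
    LinearMap.toMatrix_eq_toMatrix']
  exact (LinearMap.toMatrix'_toLin' A).symm

end Diagonalization

section Cokernel

variable {R : Type*} [CommRing R] {ι : Type*} [Fintype ι] [DecidableEq ι]

abbrev Matrix.coker {m n : Type*} [Fintype n] (A : Matrix m n R) : Type _ :=
  (m → R) ⧸ LinearMap.range A.mulVecLin

theorem Matrix.nonempty_coker_mul_mul_equiv {κ : Type*} [Fintype κ] [DecidableEq κ]
    (A : Matrix ι κ R) {P : Matrix ι ι R} {Q : Matrix κ κ R}
    (hP : IsUnit P) (hQ : IsUnit Q) : Nonempty ((P * A * Q).coker ≃ₗ[R] A.coker) := by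
  let := hP.invertible
  let := hQ.invertible
  have hrange : LinearMap.range (P * A * Q).mulVecLin =
      (LinearMap.range A.mulVecLin).map P.mulVecLin := by
    rw [mulVecLin_mul, mulVecLin_mul, LinearMap.range_comp_of_range_eq_top, LinearMap.range_comp]
    exact LinearMap.range_eq_top.mpr (Q.toLinearEquiv' ‹_›).surjective
  exact ⟨(Submodule.Quotient.equiv _ _ (P.toLinearEquiv' ‹_›) hrange.symm).symm⟩

theorem Matrix.nonempty_coker_transpose_equiv [IsDomain R] [IsPrincipalIdealRing R]
    (A : Matrix ι ι R) : Nonempty (Aᵀ.coker ≃ₗ[R] A.coker) := by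
  obtain ⟨P, Q, c, hP, hQ, rfl⟩ := A.exists_isUnit_mul_diagonal_mul_eq
  rw [transpose_mul, transpose_mul, diagonal_transpose, ← Matrix.mul_assoc]
  obtain ⟨e₁⟩ := (diagonal c).nonempty_coker_mul_mul_equiv hP hQ
  obtain ⟨e₂⟩ := (diagonal c).nonempty_coker_mul_mul_equiv
    ((isUnit_transpose Q).mpr hQ) ((isUnit_transpose P).mpr hP)
  exact ⟨e₂.trans e₁.symm⟩

end Cokernel

section Presentation

variable {ι : Type*} [Fintype ι] [DecidableEq ι]

/-- The columns are the relations `n • d = 0` and `a i • z i = c i • d` among generators `d, z i`,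
indexed by `Unit ⊕ ι`. -/
def relationMatrix (n : ℤ) (a : ι → ℕ) (c : ι → ℤ) : Matrix (Unit ⊕ ι) (Unit ⊕ ι) ℤ :=
  fromBlocks (of fun _ _ => n) (of fun _ i => -c i) 0 (diagonal fun i => (a i : ℤ))

theorem relationMatrix_mulVec (n : ℤ) (a : ι → ℕ) (c : ι → ℤ) (y : Unit ⊕ ι → ℤ) :
    relationMatrix n a c *ᵥ y =
      Sum.elim (fun _ => n * y (.inl ()) - ∑ i, c i * y (.inr i)) (fun i => a i * y (.inr i)) := by
  ext (_ | i) <;> simp [relationMatrix, mulVec, dotProduct, diagonal_apply, sub_eq_add_neg]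

theorem relationMatrix_transpose_mulVec (n : ℤ) (a : ι → ℕ) (c : ι → ℤ) (y : Unit ⊕ ι → ℤ) :
    (relationMatrix n a c)ᵀ *ᵥ y =
      Sum.elim (fun _ => n * y (.inl ())) (fun i => a i * y (.inr i) - c i * y (.inl ())) := by
  ext (_ | i) <;>
    simp [relationMatrix, mulVec, dotProduct, diagonal_apply, sub_eq_add_neg, add_comm]

theorem nonempty_coker_relationMatrix_equiv {G : Type*} [AddCommGroup G] {d : G} {a : ι → ℕ}
    (φ : G →+ ((i : ι) → ZMod (a i))) (hφ : φ.ker = AddSubgroup.zmultiples d)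
    {z : ι → G} (hz : ∀ i, φ (z i) = Pi.single i 1) {c : ι → ℤ}
    (hc : ∀ i, c i • d = (a i : ℤ) • z i) :
    Nonempty ((relationMatrix (addOrderOf d) a c).coker ≃ₗ[ℤ] G) := by
  have hφ_sum (t : ι → ℤ) : φ (∑ i, t i • z i) = fun i => (t i : ZMod (a i)) := by
    simp only [map_sum, map_zsmul, hz, ← Pi.single_smul, zsmul_eq_mul, mul_one]
    exact Finset.univ_sum_single _
  have hφ_eq_zero (g : G) : φ g = 0 ↔ ∃ k : ℤ, k • d = g := by
    rw [← AddMonoidHom.mem_ker, hφ, AddSubgroup.mem_zmultiples_iff]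
  have hcz (i : ι) (t : ℤ) : ((a i : ℤ) * t) • z i = (c i * t) • d := by
    rw [mul_comm, mul_smul, ← hc, ← mul_smul, mul_comm]
  let ρ := Fintype.linearCombination ℤ (Sum.elim (fun _ : Unit => d) z)
  have hρ (x : Unit ⊕ ι → ℤ) : ρ x = x (.inl ()) • d + ∑ i, x (.inr i) • z i := by
    simp [ρ, Fintype.linearCombination_apply, Fintype.sum_sum_type]
  have hρ_surj : Function.Surjective ρ := by
    intro g
    choose t ht using fun i => ZMod.intCast_surjective (φ g i)
    obtain ⟨s, hs⟩ := (hφ_eq_zero (g - ∑ i, t i • z i)).mp (by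
      rw [map_sub, hφ_sum, sub_eq_zero]
      exact funext fun i => (ht i).symm)
    exact ⟨Sum.elim (fun _ => s) t, by simp [hρ, hs]⟩
  have hker : ker ρ = range (relationMatrix (addOrderOf d) a c).mulVecLin := by
    ext x
    rw [mem_ker, mem_range, hρ]
    simp only [mulVecLin_apply, relationMatrix_mulVec]
    have hd : φ d = 0 := (hφ_eq_zero d).mpr ⟨1, one_smul ℤ d⟩
    constructor
    · intro hx
      have hdvd (i : ι) : (a i : ℤ) ∣ x (.inr i) := by
        have := congrFun (congrArg φ hx) i
        rw [map_add, map_zsmul, hd, smul_zero, zero_add, hφ_sum, map_zero] at this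
        exact (ZMod.intCast_zmod_eq_zero_iff_dvd _ _).mp this
      choose t ht using hdvd
      have hs : (x (.inl ()) + ∑ i, c i * t i) • d = 0 := by
        rw [← hx, add_smul, Finset.sum_smul]
        simp only [ht, hcz]
      obtain ⟨s, hs⟩ := addOrderOf_dvd_iff_zsmul_eq_zero.mpr hs
      refine ⟨Sum.elim (fun _ => s) t, ?_⟩
      ext (_ | i)
      · simp only [Sum.elim_inl, Sum.elim_inr, ← hs]
        ring
      · simp [ht]
    · rintro ⟨y, rfl⟩
      simp only [Sum.elim_inl, Sum.elim_inr, hcz, sub_smul, mul_smul, Finset.sum_smul]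
      rw [sub_add_cancel, smul_comm, natCast_zsmul, addOrderOf_nsmul_eq_zero, smul_zero]
  exact ⟨(Submodule.quotEquivOfEq _ _ hker.symm).trans (ρ.quotKerEquivOfSurjective hρ_surj)⟩

theorem nonempty_coker_relationMatrix_transpose_equiv (n : ℤ) (a : ι → ℕ) (c : ι → ℤ) :
    Nonempty ((relationMatrix n a c)ᵀ.coker ≃ₗ[ℤ]
      (ℤ × ((i : ι) → ZMod (a i))) ⧸
        Submodule.span ℤ {(n, fun i => ((-c i : ℤ) : ZMod (a i)))}) := by
  set S := Submodule.span ℤ {(n, fun i => ((-c i : ℤ) : ZMod (a i)))}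
  let ρ : (Unit ⊕ ι → ℤ) →ₗ[ℤ] ℤ × ((i : ι) → ZMod (a i)) :=
    (proj (.inl ())).prod
      (pi fun i => (Int.castAddHom (ZMod (a i))).toIntLinearMap ∘ₗ proj (.inr i))
  have hρ_surj : Function.Surjective ρ := by
    rintro ⟨s, v⟩
    choose t ht using fun i => ZMod.intCast_surjective (v i)
    exact ⟨Sum.elim (fun _ => s) t, Prod.ext rfl (funext ht)⟩
  have hρ (x : Unit ⊕ ι → ℤ) : ρ x = (x (.inl ()), fun i => (x (.inr i) : ZMod (a i))) := rfl
  have hker : ker (S.mkQ ∘ₗ ρ) = range (relationMatrix n a c)ᵀ.mulVecLin := by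
    ext x
    rw [mem_ker, LinearMap.comp_apply, Submodule.mkQ_apply, Submodule.Quotient.mk_eq_zero,
      Submodule.mem_span_singleton, mem_range, hρ]
    simp only [mulVecLin_apply, relationMatrix_transpose_mulVec, Prod.ext_iff, funext_iff,
      Prod.smul_fst, Prod.smul_snd, Pi.smul_apply, smul_eq_mul]
    constructor
    · rintro ⟨k, hk₀, hk⟩
      have hdvd (i : ι) : (a i : ℤ) ∣ x (.inr i) + c i * k := by
        rw [← ZMod.intCast_zmod_eq_zero_iff_dvd, Int.cast_add, ← hk i]
        push_cast
        rw [zsmul_eq_mul]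
        ring
      choose t ht using hdvd
      refine ⟨Sum.elim (fun _ => k) t, ?_⟩
      rintro (_ | i)
      · simpa [mul_comm] using hk₀
      · simp only [Sum.elim_inl, Sum.elim_inr, ← ht]
        ring
    · rintro ⟨y, hy⟩
      refine ⟨y (.inl ()), ?_, fun i => ?_⟩ <;> simp [← hy, mul_comm]
  exact ⟨(Submodule.quotEquivOfEq _ _ hker.symm).trans
    ((S.mkQ ∘ₗ ρ).quotKerEquivOfSurjective (S.mkQ_surjective.comp hρ_surj))⟩

end Presentation

theorem AddCommGroup.exists_addEquiv_pi_zmod (G : Type*) [AddCommGroup G] [AddGroup.FG G] :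
    ∃ (ι : Type) (_ : Fintype ι) (a : ι → ℕ), Nonempty (G ≃+ ((i : ι) → ZMod (a i))) := by
  classical
  obtain ⟨r, ι, _, p, -, e, ⟨f⟩⟩ := AddCommGroup.equiv_free_prod_directSum_zmod G
  exact ⟨Fin r ⊕ ι, inferInstance, Sum.elim 0 fun i => p i ^ e i, ⟨f.trans <|
    (Finsupp.addEquivFunOnFinite.prodCongr (DirectSum.addEquivProd _)).trans
      (LinearEquiv.sumPiEquivProdPi ℤ _ _ _).toAddEquiv.symm⟩⟩

theorem exists_int_prod_quotient_zmultiples_addEquiv {G : Type*} [AddCommGroup G] (d : G)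
    {ι : Type*} [Fintype ι] {a : ι → ℕ} (ψ : G ⧸ AddSubgroup.zmultiples d ≃+ ((i : ι) → ZMod (a i))) :
    ∃ e : ℤ × (G ⧸ AddSubgroup.zmultiples d),
      Nonempty (((ℤ × (G ⧸ AddSubgroup.zmultiples d)) ⧸ AddSubgroup.zmultiples e) ≃+ G) := by
  classical
  let φ := ψ.toAddMonoidHom.comp (QuotientAddGroup.mk' (AddSubgroup.zmultiples d))
  have hφ : φ.ker = AddSubgroup.zmultiples d := by
    ext g
    simp [φ]
  obtain ⟨z, hz⟩ : ∃ z : ι → G, ∀ i, φ (z i) = Pi.single i 1 :=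
    ⟨fun i => (ψ.symm (Pi.single i 1)).out, fun i => by simp [φ]⟩
  have hc (i : ι) : ∃ c : ℤ, c • d = (a i : ℤ) • z i := by
    rw [← AddSubgroup.mem_zmultiples_iff, ← hφ, AddMonoidHom.mem_ker, map_zsmul, hz,
      ← Pi.single_smul, zsmul_eq_mul, mul_one, Int.cast_natCast, ZMod.natCast_self, Pi.single_zero]
  choose c hc using hc
  obtain ⟨eG⟩ := nonempty_coker_relationMatrix_equiv φ hφ hz hc
  obtain ⟨eT⟩ := (relationMatrix (addOrderOf d) a c).nonempty_coker_transpose_equiv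
  obtain ⟨eQ⟩ := nonempty_coker_relationMatrix_transpose_equiv (addOrderOf d) a c
  let χ := (AddEquiv.refl ℤ).prodCongr ψ
  refine ⟨χ.symm ((addOrderOf d : ℤ), fun i => ((-c i : ℤ) : ZMod (a i))), ⟨?_⟩⟩
  exact (QuotientAddGroup.congr _ _ χ (by rw [AddMonoidHom.map_zmultiples]; simp)).trans <|
    (QuotientAddGroup.quotientAddEquivOfEq
      (Submodule.span_singleton_toAddSubgroup_eq_zmultiples _).symm).trans
      (eQ.symm.trans (eT.trans eG)).toAddEquiv

/-- if `G` is a finitely generated abelian group and `d ∈ G`, then there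
exists `ẽ ∈ ℤ ⊕ (G/⟨d⟩)` such that `(ℤ ⊕ (G/⟨d⟩))/⟨ẽ⟩ ≅ G`. -/
theorem stmt_14 (G : Type) [AddCommGroup G] [AddGroup.FG G] (d : G) :
    ∃ e : ℤ × (G ⧸ AddSubgroup.zmultiples d),
      Nonempty (((ℤ × (G ⧸ AddSubgroup.zmultiples d)) ⧸ AddSubgroup.zmultiples e) ≃+ G) := by
  obtain ⟨ι, _, a, ⟨ψ⟩⟩ := AddCommGroup.exists_addEquiv_pi_zmod (G ⧸ AddSubgroup.zmultiples d)
  exact exists_int_prod_quotient_zmultiples_addEquiv d ψ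
end

section
/- Let T = ℤ/n₁ℤ ⊕ ⋯ ⊕ ℤ/n_kℤ with n_i ≥ 2, let r ≥ 0, and let N = r + Σᵢ(1+nᵢ) + 3. Let D be the block-diagonal N'×N' matrix (N' = r + Σᵢ(1+nᵢ)) with blocks I_r and the all-ones square matrices N_i of size 1+n_i, and let A be the N×N matrix which has D in the upper-left (N−3)×(N−3) corner, entries A(j,N)=1 for 1 ≤ j ≤ N−2, A(N−2,j)=1 for 1 ≤ j ≤ N−3, A(N−1,N−1)=A(N−1,N)=1, A(N,N−2)=A(N,N−1)=A(N,N)=1, and all other entries outside D equal to 0. Then ℤ^N/(I−A)ℤ^N ≅ ℤ^r ⊕ T and ker(I−A) ≅ ℤ^r. -/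
/-- The index set for the matrix `A` of STATEMENT 18: the first `N - 3` indices
(`Fin r` for the identity block `I_r`, then `Fin (nᵢ + 1)` for each all-ones block
`Nᵢ` of size `1 + nᵢ`), followed by the last three indices `Fin 3`. -/
abbrev stmt18Index (r k : ℕ) (n : Fin k → ℕ) : Type :=
  (Fin r ⊕ (Σ i : Fin k, Fin (n i + 1))) ⊕ Fin 3

/-- The matrix `A` of STATEMENT 18: `D = diag(I_r, N₁, …, N_k)` in the upper-left
`(N-3)×(N-3)` corner, `A(j,N) = 1` for `1 ≤ j ≤ N-2`, `A(N-2,j) = 1` for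
`1 ≤ j ≤ N-3`, `A(N-1,N-1) = A(N-1,N) = 1`, `A(N,N-2) = A(N,N-1) = A(N,N) = 1`,
and all other entries outside `D` equal to `0`. -/
def stmt18Matrix (r k : ℕ) (n : Fin k → ℕ) :
    Matrix (stmt18Index r k n) (stmt18Index r k n) ℤ := fun p q =>
  match p, q with
  | .inl (.inl a), .inl (.inl b) => if a = b then 1 else 0
  | .inl (.inl _), .inl (.inr _) => 0
  | .inl (.inr _), .inl (.inl _) => 0
  | .inl (.inr ⟨i, _⟩), .inl (.inr ⟨j, _⟩) => if i = j then 1 else 0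
  | .inl _, .inr c => if c = 2 then 1 else 0
  | .inr a, .inl _ => if a = 0 then 1 else 0
  | .inr a, .inr b =>
      if a = 0 then (if b = 2 then 1 else 0)
      else if a = 1 then (if b = 1 ∨ b = 2 then 1 else 0)
      else 1

namespace Stmt18Aux

variable {r k : ℕ} {n : Fin k → ℕ}

lemma fin3_cases : ∀ c : Fin 3, c = 0 ∨ c = 1 ∨ c = 2 := by decide

lemma sum_sig (f : (Σ i : Fin k, Fin (n i + 1)) → ℤ) :
    ∑ x : (Σ i : Fin k, Fin (n i + 1)), f x = ∑ i, ∑ j, f ⟨i, j⟩ := by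
  rw [← Finset.univ_sigma_univ, Finset.sum_sigma]

lemma A_mv_r (w : stmt18Index r k n → ℤ) (a : Fin r) :
    (stmt18Matrix r k n).mulVec w (.inl (.inl a)) = w (.inl (.inl a)) + w (.inr 2) := by
  simp [Matrix.mulVec, dotProduct, stmt18Matrix, Fintype.sum_sum_type, Fin.sum_univ_three,
    Finset.sum_ite_eq, sum_sig]

lemma A_mv_sig (w : stmt18Index r k n → ℤ) (i : Fin k) (j : Fin (n i + 1)) :
    (stmt18Matrix r k n).mulVec w (.inl (.inr ⟨i, j⟩)) =
      (∑ j', w (.inl (.inr ⟨i, j'⟩))) + w (.inr 2) := by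
  simp [Matrix.mulVec, dotProduct, stmt18Matrix, Fintype.sum_sum_type, Fin.sum_univ_three,
    Finset.sum_ite_eq, sum_sig, ite_and]
  have h : ∀ x : Fin k, (∑ y : Fin (n x + 1), if i = x then w (.inl (.inr ⟨x, y⟩)) else 0)
      = if i = x then ∑ y : Fin (n x + 1), w (.inl (.inr ⟨x, y⟩)) else 0 := by
    intro x; split_ifs <;> simp
  simp_rw [h, Finset.sum_ite_eq]; simp

lemma A_mv_c0 (w : stmt18Index r k n → ℤ) :
    (stmt18Matrix r k n).mulVec w (.inr 0) =
      (∑ a, w (.inl (.inl a))) + (∑ x : (Σ i : Fin k, Fin (n i + 1)), w (.inl (.inr x)))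
        + w (.inr 2) := by
  simp [Matrix.mulVec, dotProduct, stmt18Matrix, Fintype.sum_sum_type, Fin.sum_univ_three]

lemma A_mv_c1 (w : stmt18Index r k n → ℤ) :
    (stmt18Matrix r k n).mulVec w (.inr 1) = w (.inr 1) + w (.inr 2) := by
  simp [Matrix.mulVec, dotProduct, stmt18Matrix, Fintype.sum_sum_type, Fin.sum_univ_three]

lemma A_mv_c2 (w : stmt18Index r k n → ℤ) :
    (stmt18Matrix r k n).mulVec w (.inr 2) = w (.inr 0) + w (.inr 1) + w (.inr 2) := by
  simp [Matrix.mulVec, dotProduct, stmt18Matrix, Fintype.sum_sum_type, Fin.sum_univ_three]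

lemma M_mv (w : stmt18Index r k n → ℤ) (p : stmt18Index r k n) :
    ((1 - stmt18Matrix r k n).mulVec w) p = w p - (stmt18Matrix r k n).mulVec w p := by
  rw [Matrix.sub_mulVec, Matrix.one_mulVec]; rfl

/-- The linear functional computing the cokernel. -/
def phi (r k : ℕ) (n : Fin k → ℕ) :
    ((stmt18Index r k n) → ℤ) →ₗ[ℤ] (Fin r → ℤ) × (∀ i, ZMod (n i)) where
  toFun v := (fun a => v (.inl (.inl a)) - v (.inr 1),
    fun i => (((∑ j, v (.inl (.inr ⟨i, j⟩))) - v (.inr 1) : ℤ) : ZMod (n i)))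
  map_add' v w := by
    refine Prod.ext (funext fun a => ?_) (funext fun i => ?_)
    · simp only [Pi.add_apply, Prod.fst_add]; ring
    · simp only [Pi.add_apply, Prod.snd_add]
      push_cast [Finset.sum_add_distrib]
      ring
  map_smul' c v := by
    refine Prod.ext (funext fun a => ?_) (funext fun i => ?_)
    · simp only [Pi.smul_apply, smul_eq_mul, RingHom.id_apply, Prod.smul_fst]
      ring
    · simp only [RingHom.id_apply, Prod.smul_snd]
      simp only [Pi.smul_apply, smul_eq_mul, zsmul_eq_mul]
      push_cast
      rw [mul_sub, Finset.mul_sum]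

lemma phi_comp (w : stmt18Index r k n → ℤ) :
    phi r k n ((1 - stmt18Matrix r k n).mulVecLin w) = 0 := by
  rw [Matrix.mulVecLin_apply]
  refine Prod.ext (funext fun a => ?_) (funext fun i => ?_)
  · simp [phi, M_mv, A_mv_r, A_mv_c1]
  · have key : (∑ j, ((1 - stmt18Matrix r k n).mulVec w) (.inl (.inr ⟨i, j⟩)))
        - ((1 - stmt18Matrix r k n).mulVec w) (.inr 1)
        = (n i : ℤ) * (-(∑ j', w (.inl (.inr ⟨i, j'⟩))) - w (.inr 2)) := by
      simp only [M_mv, A_mv_sig, A_mv_c1, Finset.sum_sub_distrib, Finset.sum_const,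
        Finset.card_univ, Fintype.card_fin, nsmul_eq_mul]
      push_cast
      ring
    simp only [phi, LinearMap.coe_mk, AddHom.coe_mk, key, Prod.snd_zero, Pi.zero_apply]
    rw [ZMod.intCast_zmod_eq_zero_iff_dvd]
    exact ⟨_, rfl⟩

lemma phi_surj (h2 : ∀ i, 2 ≤ n i) : Function.Surjective (phi r k n) := by
  rintro ⟨u, z⟩
  refine ⟨Sum.elim (Sum.elim u (fun x => if x.2 = 0 then ((z x.1).val : ℤ) else 0))
    ![0, 0, 0], ?_⟩
  haveI : ∀ i, NeZero (n i) := fun i => ⟨by have := h2 i; omega⟩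
  refine Prod.ext (funext fun a => ?_) (funext fun i => ?_)
  · simp [phi]
  · simp only [phi, LinearMap.coe_mk, AddHom.coe_mk, Sum.elim_inl, Sum.elim_inr,
      Matrix.cons_val_one, Matrix.head_cons, sub_zero]
    push_cast
    rw [Finset.sum_ite_eq' Finset.univ (0 : Fin (n i + 1)) (fun _ => ((z i).val : ZMod (n i)))]
    simp [ZMod.natCast_val, ZMod.cast_id]

lemma range_eq_ker :
    LinearMap.range ((1 - stmt18Matrix r k n).mulVecLin) = LinearMap.ker (phi r k n) := by
  ext v
  constructor
  · rintro ⟨w, rfl⟩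
    exact phi_comp w
  · intro hv
    have hv1 : ∀ a : Fin r, v (.inl (.inl a)) = v (.inr 1) := by
      intro a
      have := congrFun (congrArg Prod.fst hv) a
      simpa [phi, sub_eq_zero] using this
    have hv2 : ∀ i, (n i : ℤ) ∣ ((∑ j, v (.inl (.inr ⟨i, j⟩))) - v (.inr 1)) := by
      intro i
      have := congrFun (congrArg Prod.snd hv) i
      simp only [phi, LinearMap.coe_mk, AddHom.coe_mk, Pi.zero_apply, LinearMap.zero_apply] at this
      exact (ZMod.intCast_zmod_eq_zero_iff_dvd _ _).mp this
    set t := v (.inr 1) with ht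
    choose m hm using hv2
    set W : Fin k → ℤ := fun i => t - m i with hW
    refine ⟨Sum.elim (Sum.elim (fun _ => 0)
        (fun x => v (.inl (.inr x)) - t + W x.1))
      ![v (.inr 0) + (∑ i, W i) - t,
        -(v (.inr 0) + (∑ i, W i) - t) - v (.inr 2),
        -t], ?_⟩
    rw [Matrix.mulVecLin_apply]
    funext p
    have hWi : ∀ i, W i = t - m i := fun i => rfl
    have hsum : ∀ i : Fin k,
        (∑ j' : Fin (n i + 1), (v (.inl (.inr ⟨i, j'⟩)) - t + W i)) = W i := by
      intro i
      have h1 : (∑ j' : Fin (n i + 1), v (.inl (.inr ⟨i, j'⟩))) = (n i : ℤ) * m i + t := by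
        have := hm i; linarith
      rw [Finset.sum_add_distrib, Finset.sum_sub_distrib, h1, Finset.sum_const,
        Finset.sum_const, Finset.card_univ, Fintype.card_fin, nsmul_eq_mul, nsmul_eq_mul, hWi]
      push_cast
      ring
    obtain (a | ⟨i, j⟩) | c := p
    · rw [M_mv, A_mv_r]
      simp [hv1 a]
    · rw [M_mv, A_mv_sig]
      have := hsum i
      simp only [Sum.elim_inl, Sum.elim_inr] at this ⊢
      rw [this]
      simp
      ring
    · rcases fin3_cases c with rfl | rfl | rfl
      · rw [M_mv, A_mv_c0]
        rw [sum_sig]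
        simp only [Sum.elim_inl, Sum.elim_inr, Matrix.cons_val_zero, Matrix.cons_val_one,
          Matrix.head_cons]
        rw [Finset.sum_congr rfl (fun i _ => hsum i)]
        simp only [Finset.sum_const_zero, Matrix.cons_val_two, Matrix.tail_cons,
          Matrix.head_cons]
        ring
      · rw [M_mv, A_mv_c1]
        simp only [Sum.elim_inr, Matrix.cons_val_zero, Matrix.cons_val_one, Matrix.head_cons,
          Matrix.cons_val_two, Matrix.tail_cons]
        ring
      · rw [M_mv, A_mv_c2]
        simp only [Sum.elim_inr, Matrix.cons_val_zero, Matrix.cons_val_one, Matrix.head_cons,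
          Matrix.cons_val_two, Matrix.tail_cons]
        ring

end Stmt18Aux

/-- for the matrix `A` above (of size `N = r + Σᵢ(1+nᵢ) + 3`),
`ℤ^N/(I-A)ℤ^N ≅ ℤ^r ⊕ T` where `T = ⊕ᵢ ℤ/nᵢℤ`, and `ker(I-A) ≅ ℤ^r`. -/
theorem stmt_18 (r k : ℕ) (n : Fin k → ℕ) (h2 : ∀ i, 2 ≤ n i) :
    Nonempty (
      ((stmt18Index r k n → ℤ) ⧸
        LinearMap.range (Matrix.mulVecLin
          ((1 : Matrix (stmt18Index r k n) (stmt18Index r k n) ℤ) - stmt18Matrix r k n)))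
      ≃+ ((Fin r → ℤ) × ∀ i : Fin k, ZMod (n i)))
    ∧ Nonempty (
      (LinearMap.ker (Matrix.mulVecLin
        ((1 : Matrix (stmt18Index r k n) (stmt18Index r k n) ℤ) - stmt18Matrix r k n)))
      ≃+ (Fin r → ℤ)) := by
  constructor
  · exact ⟨((Submodule.quotEquivOfEq _ _ Stmt18Aux.range_eq_ker).trans
      ((Stmt18Aux.phi r k n).quotKerEquivOfSurjective (Stmt18Aux.phi_surj h2))).toAddEquiv⟩
  · have hg : ∀ u : Fin r → ℤ,
        ((1 : Matrix (stmt18Index r k n) (stmt18Index r k n) ℤ)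
          - stmt18Matrix r k n).mulVecLin
          (Sum.elim (Sum.elim u (fun _ => 0)) ![∑ a, u a, -∑ a, u a, 0]) = 0 := by
      intro u
      rw [Matrix.mulVecLin_apply]
      funext p
      obtain (a | ⟨i, j⟩) | c := p
      · rw [Stmt18Aux.M_mv, Stmt18Aux.A_mv_r]; simp
      · rw [Stmt18Aux.M_mv, Stmt18Aux.A_mv_sig]; simp
      · rcases Stmt18Aux.fin3_cases c with rfl | rfl | rfl
        · rw [Stmt18Aux.M_mv, Stmt18Aux.A_mv_c0]; simp
        · rw [Stmt18Aux.M_mv, Stmt18Aux.A_mv_c1]; simp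
        · rw [Stmt18Aux.M_mv, Stmt18Aux.A_mv_c2]; simp
    refine ⟨{ toFun := fun v => fun a => v.1 (.inl (.inl a)),
              invFun := fun u => ⟨_, (LinearMap.mem_ker).mpr (hg u)⟩,
              left_inv := ?_, right_inv := ?_, map_add' := ?_ }⟩
    · rintro ⟨v, hv⟩
      rw [LinearMap.mem_ker, Matrix.mulVecLin_apply] at hv
      have hp : ∀ p, ((1 - stmt18Matrix r k n).mulVec v) p = 0 := fun p => congrFun hv p
      have hc2 : v (.inr 2) = 0 := by
        have := hp (.inr 1); rw [Stmt18Aux.M_mv, Stmt18Aux.A_mv_c1] at this; linarith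
      have hblock : ∀ i (j : Fin (n i + 1)), v (.inl (.inr ⟨i, j⟩)) = 0 := by
        intro i j
        have hij : ∀ j' : Fin (n i + 1),
            v (.inl (.inr ⟨i, j'⟩)) = ∑ j'', v (.inl (.inr ⟨i, j''⟩)) := by
          intro j'
          have := hp (.inl (.inr ⟨i, j'⟩))
          rw [Stmt18Aux.M_mv, Stmt18Aux.A_mv_sig] at this
          rw [hc2] at this; linarith
        have hSi : (∑ j'', v (.inl (.inr ⟨i, j''⟩))) = 0 := by
          have hs : (∑ j'', v (.inl (.inr ⟨i, j''⟩)))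
              = (n i + 1 : ℤ) * (∑ j'', v (.inl (.inr ⟨i, j''⟩))) := by
            nth_rewrite 1 [Finset.sum_congr rfl (fun j' _ => hij j')]
            rw [Finset.sum_const, Finset.card_univ, Fintype.card_fin, nsmul_eq_mul]
            push_cast
            ring
          have h2i := h2 i
          have hz : (n i : ℤ) * (∑ j'', v (.inl (.inr ⟨i, j''⟩))) = 0 := by linarith
          have hn : (n i : ℤ) ≠ 0 := by positivity
          exact (mul_eq_zero.mp hz).resolve_left hn
        rw [hij j, hSi]
      have hc0 : v (.inr 0) = ∑ a, v (.inl (.inl a)) := by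
        have := hp (.inr 0)
        rw [Stmt18Aux.M_mv, Stmt18Aux.A_mv_c0] at this
        have hz : (∑ x : (Σ i : Fin k, Fin (n i + 1)), v (.inl (.inr x))) = 0 := by
          rw [Stmt18Aux.sum_sig]
          exact Finset.sum_eq_zero fun i _ => Finset.sum_eq_zero fun j _ => hblock i j
        rw [hz, hc2] at this; linarith
      have hc1 : v (.inr 1) = -v (.inr 0) := by
        have := hp (.inr 2)
        rw [Stmt18Aux.M_mv, Stmt18Aux.A_mv_c2] at this; linarith
      refine Subtype.ext (funext fun p => ?_)
      obtain (a | ⟨i, j⟩) | c := p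
      · rfl
      · exact (hblock i j).symm
      · rcases Stmt18Aux.fin3_cases c with rfl | rfl | rfl
        · simpa using hc0.symm
        · show -∑ a, v (.inl (.inl a)) = v (.inr 1)
          rw [hc1, hc0]
        · simpa using hc2.symm
    · intro u; rfl
    · intro v w; rfl
end
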